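/- arXiv:2101.09767 — 8 statements merged into one kernel-verified Lean document; each statement's English description precedes it below -/
import Mathlib

section
/- Every finite-dimensional associative algebra R over a field F with dim_F R = n - 1 satisfies the standard polynomial identity s_n(x_1,...,x_n) = Σ_{σ ∈ Sym(n)} sgn(σ) x_{σ(1)} ⋯ x_{σ(n)} = 0. -/
/-!
The standard polynomial `s_n` is the alternatization of the multilinear map
`(x₁, …, xₙ) ↦ x₁ ⋯ xₙ`, hence an alternating map in `n` arguments. An alternating map
vanishes on linearly dependent families, and every family of `n` vectors is dependent
once `n > dim_F R`.
-/

open MultilinearMap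

def standardPolynomial {R : Type*} [Ring R] {n : ℕ} (a : Fin n → R) : R :=
  ∑ σ : Equiv.Perm (Fin n), (Equiv.Perm.sign σ : ℤ) • (List.ofFn fun i => a (σ i)).prod

theorem alternatization_mkPiAlgebraFin_apply (F R : Type*) [CommSemiring F] [Ring R]
    [Algebra F R] {n : ℕ} (a : Fin n → R) :
    alternatization (MultilinearMap.mkPiAlgebraFin F n R) a = standardPolynomial a := by
  simp [alternatization_apply, standardPolynomial, domDomCongr, Units.smul_def]

theorem standardPolynomial_eq_zero_of_finrank_lt (F R : Type*) [CommRing F] [IsDomain F]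
    [Ring R] [Algebra F R] [Module.Finite F R] [Module.IsTorsionFree F R]
    {n : ℕ} (hn : Module.finrank F R < n) (a : Fin n → R) :
    standardPolynomial a = 0 := by
  rw [← alternatization_mkPiAlgebraFin_apply F]
  refine (alternatization (MultilinearMap.mkPiAlgebraFin F n R)).map_linearDependent a
    fun h => ?_
  have hle : n ≤ Module.finrank F R := by simpa using h.fintype_card_le_finrank
  omega

/-- Every finite-dimensional associative algebra `R` over a field `F` with
`dim_F R = n - 1` satisfies the standard identity `s_n = 0`. -/
theorem stmt_0 (F : Type*) [Field F] (R : Type*) [Ring R] [Algebra F R]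
    [Module.Finite F R] (n : ℕ) (hdim : Module.finrank F R = n - 1) :
    ∀ a : Fin n → R,
      ∑ σ : Equiv.Perm (Fin n),
        (Equiv.Perm.sign σ : ℤ) • (List.ofFn fun i => a (σ i)).prod = 0 := by
  intro a
  rcases Nat.eq_zero_or_pos n with rfl | hn
  · have : Subsingleton R := Module.finrank_zero_iff (R := F).mp hdim
    exact Subsingleton.elim _ _
  · exact standardPolynomial_eq_zero_of_finrank_lt F R (by omega) a
end

section
/- Let f : U × V → W be a bilinear map of vector spaces over a field F such that for each u ∈ U, dim_F f(u, V) ≤ m, and for each v ∈ V, dim_F f(U, v) ≤ n. Then dim_F span(f(U, V)) ≤ mn. -/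
/-
Neumann's argument. Choose `u₀` with `W₀ = f(u₀, V)` of maximal dimension `r ≤ m`. Modulo `W₀`
every `f(U, v)` loses a dimension, so induction on `n` gives `dim span f(U, V) ≤ r + m (n - 1)`.
Suppose some `v` kept dimension `n` modulo `W₀`, witnessed by `u₁, …, uₙ`. Then `f(u₀, v) = 0`,
and it suffices to find `x` with `f(u₀, x) ≠ 0` and the `f(uᵢ, x)` still independent modulo `W₀`:
then `dim f(U, x) ≥ n + 1`. Over an infinite field take `x = v + t c` with `f(u₀, c) ≠ 0` and `t`
generic. Over `𝔽_q`, restrict the bilinear map `(β, x) ↦ f(Σ βᵢ uᵢ, x) mod W₀` to an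
`(r + 1)`-dimensional space of `x` containing `v` and mapping onto `W₀`; by maximality of `r` each
`β` has a nonzero zero `x`, and counting the zeros modulo `q` produces the wanted `x`.
-/

open LinearMap Module

section Neumann

variable {F U V W E D M : Type*} [Field F] [AddCommGroup U] [Module F U] [AddCommGroup V]
  [Module F V] [AddCommGroup W] [Module F W] [AddCommGroup E] [Module F E] [AddCommGroup D]
  [Module F D] [AddCommGroup M] [Module F M]

theorem Submodule.rank_le_rank_map_mkQ_add (S W₀ : Submodule F W) :
    Module.rank F S ≤ Module.rank F (S.map W₀.mkQ) + Module.rank F W₀ := by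
  rw [← (W₀.mkQ ∘ₗ S.subtype).rank_range_add_rank_ker, range_comp, Submodule.range_subtype]
  gcongr
  refine rank_le_of_injective ((S.subtype ∘ₗ (ker _).subtype).codRestrict W₀ fun x => ?_) ?_
  · exact (Submodule.Quotient.mk_eq_zero W₀).1 (mem_ker.1 x.2)
  · exact fun x y h => Subtype.ext <| Subtype.ext (Subtype.ext_iff.1 h :)

theorem Submodule.finrank_map_mkQ_lt {S W₀ : Submodule F W} [FiniteDimensional F S] {w : W}
    (hS : w ∈ S) (hW₀ : w ∈ W₀) (hw : w ≠ 0) : finrank F (S.map W₀.mkQ) < finrank F S := by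
  have hker : ker (W₀.mkQ ∘ₗ S.subtype) ≠ ⊥ :=
    (Submodule.ne_bot_iff _).2 ⟨⟨w, hS⟩, by simpa using hW₀, by simpa using hw⟩
  rw [← (W₀.mkQ ∘ₗ S.subtype).finrank_range_add_finrank_ker, range_comp, Submodule.range_subtype]
  have := Submodule.one_le_finrank_iff.2 hker
  omega

theorem Module.natCard_cast_eq_zero [Module.Finite F M] [Nontrivial M] :
    (Nat.card M : ZMod (Nat.card F)) = 0 := by
  rw [Module.natCard_eq_pow_finrank (K := F) (V := M), Nat.cast_pow, ZMod.natCast_self,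
    zero_pow finrank_pos.ne']

open Classical in
theorem Submodule.sum_ite_ne_zero_mem [Fintype M] (K : Submodule F M) :
    ∑ z : M, (if z ≠ 0 ∧ z ∈ K then 1 else 0 : ZMod (Nat.card F)) = if K = ⊥ then 0 else -1 := by
  have hK : ∑ z : M, (if z ∈ K then 1 else 0 : ZMod (Nat.card F)) = Nat.card K := by
    rw [Finset.sum_boole, Nat.card_eq_fintype_card (α := {z // z ∈ K}), Fintype.card_subtype]
  have hsplit : ∀ z : M, (if z ≠ 0 ∧ z ∈ K then 1 else 0 : ZMod (Nat.card F)) =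
      (if z ∈ K then 1 else 0) - if z = 0 then 1 else 0 := by
    intro z
    by_cases hz : z = 0 <;> simp [hz]
  rw [Finset.sum_congr rfl fun z _ => hsplit z, Finset.sum_sub_distrib, hK, Fintype.sum_ite_eq']
  split_ifs with hbot
  · simp [hbot]
  · have : Nontrivial K := Submodule.nontrivial_iff_ne_bot.2 hbot
    rw [Module.natCard_cast_eq_zero, zero_sub]

/- Count the pairs `(β, z)` of nonzero vectors with `B β z = 0` by rows and by columns, modulo
`q = |F|`: a nonzero subspace has `q ^ k ≡ 0` elements, hence `≡ -1` nonzero ones. -/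
open Classical in
theorem LinearMap.natCard_ker_flip_ne_bot_eq_neg_one [Finite F] [Module.Finite F E]
    [Module.Finite F D] [Nontrivial E] (B : E →ₗ[F] D →ₗ[F] M) (hB : ∀ β, ker (B β) ≠ ⊥) :
    (Nat.card {z : D // z ≠ 0 ∧ ker (B.flip z) ≠ ⊥} : ZMod (Nat.card F)) = -1 := by
  have := Module.finite_of_finite F (M := E)
  have := Module.finite_of_finite F (M := D)
  have := Fintype.ofFinite E
  have := Fintype.ofFinite D
  have hrow : ∀ β : E, ∑ z : D, (if β ≠ 0 ∧ z ≠ 0 ∧ B β z = 0 then 1 else 0 : ZMod (Nat.card F))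
      = if β = 0 then 0 else -1 := by
    intro β
    by_cases hβ : β = 0
    · simp [hβ]
    · simpa [hβ, hB β] using (ker (B β)).sum_ite_ne_zero_mem
  have hcol : ∀ z : D, ∑ β : E, (if β ≠ 0 ∧ z ≠ 0 ∧ B β z = 0 then 1 else 0 : ZMod (Nat.card F))
      = -if z ≠ 0 ∧ ker (B.flip z) ≠ ⊥ then 1 else 0 := by
    intro z
    by_cases hz : z = 0
    · simp [hz]
    · have hker : ∀ β : E, (if β ≠ 0 ∧ z ≠ 0 ∧ B β z = 0 then 1 else 0 : ZMod (Nat.card F)) =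
          if β ≠ 0 ∧ β ∈ ker (B.flip z) then 1 else 0 := fun β => by simp [hz]
      rw [Finset.sum_congr rfl fun β _ => hker β, Submodule.sum_ite_ne_zero_mem]
      split_ifs <;> simp_all
  have hcount := Finset.sum_comm (s := Finset.univ) (t := Finset.univ)
    (f := fun β z => (if β ≠ 0 ∧ z ≠ 0 ∧ B β z = 0 then 1 else 0 : ZMod (Nat.card F)))
  simp only [hrow, hcol, Finset.sum_neg_distrib, Finset.sum_boole] at hcount
  have hE : ∑ β : E, (if β = 0 then 0 else -1 : ZMod (Nat.card F)) = 1 := by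
    have hsplit : ∀ β : E,
        (if β = 0 then 0 else -1 : ZMod (Nat.card F)) = (if β = 0 then 1 else 0) - 1 :=
      fun β => by split_ifs <;> simp
    rw [Finset.sum_congr rfl fun β _ => hsplit β, Finset.sum_sub_distrib, Fintype.sum_ite_eq',
      Finset.sum_const, Finset.card_univ, ← Nat.card_eq_fintype_card, nsmul_one,
      Module.natCard_cast_eq_zero, sub_zero]
  rw [hE, ← Fintype.card_subtype, ← Nat.card_eq_fintype_card] at hcount
  linear_combination hcount

theorem LinearMap.exists_mem_ne_zero_ker_flip_ne_bot [Finite F] [Module.Finite F E]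
    [Module.Finite F D] [Nontrivial E] (B : E →ₗ[F] D →ₗ[F] M) (hB : ∀ β, ker (B β) ≠ ⊥)
    {K : Submodule F D} (hK : K ≠ ⊥) (hKc : ∀ z ∉ K, ker (B.flip z) ≠ ⊥) :
    ∃ z ∈ K, z ≠ 0 ∧ ker (B.flip z) ≠ ⊥ := by
  classical
  by_contra! h
  have := Module.finite_of_finite F (M := D)
  have : Nontrivial D := by
    obtain ⟨x, -, hx⟩ := K.ne_bot_iff.1 hK
    exact nontrivial_of_ne x 0 hx
  have : Nontrivial K := Submodule.nontrivial_iff_ne_bot.2 hK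
  have : Fact (1 < Nat.card F) := ⟨Finite.one_lt_card⟩
  have hset : {z : D // z ≠ 0 ∧ ker (B.flip z) ≠ ⊥} ≃ {z : D // z ∉ K} :=
    Equiv.subtypeEquivRight fun z => ⟨fun hz hzK => hz.2 (h z hzK hz.1),
      fun hzK => ⟨fun hz => hzK (hz ▸ K.zero_mem), hKc z hzK⟩⟩
  have hsplit : Nat.card K + Nat.card {z : D // z ∉ K} = Nat.card D := by
    rw [← Nat.card_sum, Nat.card_congr (Equiv.sumCompl (· ∈ K))]
  have hcount := B.natCard_ker_flip_ne_bot_eq_neg_one hB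
  rw [Nat.card_congr hset] at hcount
  have := congrArg (Nat.cast : ℕ → ZMod (Nat.card F)) hsplit
  rw [Nat.cast_add, hcount, Module.natCard_cast_eq_zero, Module.natCard_cast_eq_zero] at this
  simp at this

theorem LinearMap.exists_ne_zero_injective_add_smul [Infinite F] [FiniteDimensional F E]
    {φ : E →ₗ[F] M} (hφ : Function.Injective φ) (ψ : E →ₗ[F] M) :
    ∃ t : F, t ≠ 0 ∧ Function.Injective (φ + t • ψ) := by
  -- For `t ≠ 0`, a kernel vector of `φ + t • ψ` is an eigenvector of `ρ ∘ ψ` for `-t⁻¹`.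
  obtain ⟨ρ, hρ⟩ := φ.exists_leftInverse_of_injective (ker_eq_bot.2 hφ)
  obtain ⟨t, ht⟩ := ((Set.finite_singleton 0).union
    ((Module.End.finite_hasEigenvalue (ρ ∘ₗ ψ)).image fun μ => -μ⁻¹)).exists_notMem
  simp only [Set.mem_union, Set.mem_singleton_iff, Set.mem_image, not_or] at ht
  refine ⟨t, ht.1, ?_⟩
  rw [← ker_eq_bot, ker_eq_bot']
  intro β hβ
  by_contra hβ0
  refine ht.2 ⟨-t⁻¹, Module.End.hasEigenvalue_of_hasEigenvector
    ⟨Module.End.mem_eigenspace_iff.2 ?_, hβ0⟩, by simp⟩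
  have h := congrArg ρ hβ
  simp only [add_apply, smul_apply, map_add, map_smul, map_zero] at h
  rw [← comp_apply ρ φ, hρ, id_apply] at h
  rw [comp_apply, neg_smul, eq_neg_iff_add_eq_zero, ← smul_right_inj ht.1, smul_add, smul_smul,
    mul_inv_cancel₀ ht.1, one_smul, smul_zero, add_comm, h]

theorem Cardinal.exists_forall_le_of_forall_le_natCast {α : Type*} [Nonempty α]
    {g : α → Cardinal} {m : ℕ} (h : ∀ a, g a ≤ m) : ∃ a₀, ∀ a, g a ≤ g a₀ := by
  have hfin : (Set.range g).Finite := by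
    refine ((Set.finite_Iic m).image ((↑) : ℕ → Cardinal)).subset ?_
    rintro _ ⟨a, rfl⟩
    obtain ⟨k, hk⟩ := Cardinal.lt_aleph0.1 ((h a).trans_lt (Cardinal.natCast_lt_aleph0))
    exact ⟨k, by simpa [hk] using h a, hk.symm⟩
  obtain ⟨_, ⟨a₀, rfl⟩, ha₀⟩ := Set.exists_max_image _ _root_.id hfin (Set.range_nonempty g)
  exact ⟨a₀, fun a => ha₀ _ ⟨a, rfl⟩⟩

theorem LinearMap.exists_injective_comp_of_le_rank_range {k : ℕ} (φ : U →ₗ[F] M)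
    (h : k ≤ Module.rank F (range φ)) : ∃ L : (Fin k → F) →ₗ[F] U, Function.Injective (φ ∘ₗ L) := by
  obtain ⟨y, hy⟩ := exists_linearIndependent_of_le_rank h
  obtain ⟨σ, hσ⟩ := φ.rangeRestrict.exists_rightInverse_of_surjective φ.range_rangeRestrict
  refine ⟨σ ∘ₗ Fintype.linearCombination F y, ?_⟩
  have : φ ∘ₗ σ = (range φ).subtype := by
    ext x
    exact congrArg Subtype.val (LinearMap.congr_fun hσ x)
  rw [← comp_assoc, this]
  exact Subtype.val_injective.comp hy.fintypeLinearCombination_injective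

theorem LinearMap.range_compr₂_apply (f : U →ₗ[F] V →ₗ[F] W) (g : W →ₗ[F] M) (u : U) :
    range (f.compr₂ g u) = (range (f u)).map g :=
  range_comp (f u) g

theorem LinearMap.range_flip_compr₂_apply (f : U →ₗ[F] V →ₗ[F] W) (g : W →ₗ[F] M) (v : V) :
    range ((f.compr₂ g).flip v) = (range (f.flip v)).map g :=
  range_comp (f.flip v) g

theorem LinearMap.span_compr₂_apply (f : U →ₗ[F] V →ₗ[F] W) (g : W →ₗ[F] M) :
    Submodule.span F {w | ∃ u v, f.compr₂ g u v = w} =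
      (Submodule.span F {w | ∃ u v, f u v = w}).map g := by
  rw [Submodule.map_span]
  congr 1
  ext
  simp [eq_comm]

theorem LinearMap.exists_apply_ne_zero_injective_flip_of_infinite [Infinite F]
    [FiniteDimensional F E] (Φ : E →ₗ[F] V →ₗ[F] M) {A : V →ₗ[F] W} (hA : A ≠ 0) {v : V}
    (hv0 : A v = 0) (hv : Function.Injective (Φ.flip v)) :
    ∃ x, A x ≠ 0 ∧ Function.Injective (Φ.flip x) := by
  obtain ⟨c, hc⟩ := DFunLike.ne_iff.1 hA
  obtain ⟨t, ht, hinj⟩ := exists_ne_zero_injective_add_smul hv (Φ.flip c)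
  refine ⟨v + t • c, ?_, ?_⟩
  · simpa [hv0, ht] using hc
  · rwa [map_add, map_smul]

theorem LinearMap.exists_apply_ne_zero_injective_flip_of_finite [Finite F]
    [FiniteDimensional F E] [Nontrivial E] (Φ : E →ₗ[F] V →ₗ[F] M) (A : V →ₗ[F] W)
    [FiniteDimensional F (range A)]
    (hΦ : ∀ β, Module.rank F (range (Φ β)) ≤ finrank F (range A)) {v : V}
    (hv0 : A v = 0) (hv : Function.Injective (Φ.flip v)) :
    ∃ x, A x ≠ 0 ∧ Function.Injective (Φ.flip x) := by
  obtain ⟨σ, hσ⟩ := A.rangeRestrict.exists_rightInverse_of_surjective A.range_rangeRestrict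
  -- `A ∘ e` is the first projection; its kernel `K = 0 × F` is sent onto `F v`.
  set e : range A × F →ₗ[F] V := σ.coprod (toSpanSingleton F V v)
  have hAe : ∀ z, A (e z) = z.1 := fun z => by
    simpa [e, hv0] using congrArg Subtype.val (LinearMap.congr_fun hσ z.1)
  have hflip : ∀ z, (Φ.compl₂ e).flip z = Φ.flip (e z) := fun z => rfl
  by_contra! hsing
  have hB : ∀ β, ker (Φ.compl₂ e β) ≠ ⊥ := by
    intro β hβ
    have h := (Submodule.rank_mono (range_comp_le_range e (Φ β))).trans (hΦ β)
    change Module.rank F (range (Φ β ∘ₗ e)) ≤ _ at h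
    rw [← finrank_eq_rank, finrank_range_of_inj (f := Φ β ∘ₗ e) (ker_eq_bot.1 hβ), finrank_prod,
      finrank_self] at h
    norm_cast at h
    omega
  have hK : range (inr F (range A) F) ≠ ⊥ :=
    (Submodule.ne_bot_iff _).2 ⟨inr F _ F 1, mem_range_self _ _, by simp⟩
  have hKc : ∀ z ∉ range (inr F (range A) F), ker ((Φ.compl₂ e).flip z) ≠ ⊥ := by
    intro z hz hbot
    have hz1 : z.1 ≠ 0 := fun h => hz ⟨z.2, Prod.ext h.symm rfl⟩
    exact hsing (e z) (by simpa [hAe] using hz1) (ker_eq_bot.1 (hflip z ▸ hbot))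
  obtain ⟨z, ⟨s, rfl⟩, hz0, hz⟩ := (Φ.compl₂ e).exists_mem_ne_zero_ker_flip_ne_bot hB hK hKc
  have hs : s ≠ 0 := by
    rintro rfl
    exact hz0 (map_zero _)
  apply hz
  rw [hflip, ker_eq_bot, show e (inr F _ F s) = s • v by simp [e], map_smul]
  exact (smul_right_injective _ hs).comp hv

theorem LinearMap.exists_apply_ne_zero_injective_flip [FiniteDimensional F E] [Nontrivial E]
    (Φ : E →ₗ[F] V →ₗ[F] M) (A : V →ₗ[F] W) [FiniteDimensional F (range A)]
    (hΦ : ∀ β, Module.rank F (range (Φ β)) ≤ finrank F (range A)) {v : V}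
    (hv0 : A v = 0) (hv : Function.Injective (Φ.flip v)) :
    ∃ x, A x ≠ 0 ∧ Function.Injective (Φ.flip x) := by
  rcases finite_or_infinite F with hF | hF
  · exact Φ.exists_apply_ne_zero_injective_flip_of_finite A hΦ hv0 hv
  refine Φ.exists_apply_ne_zero_injective_flip_of_infinite ?_ hv0 hv
  rintro rfl
  obtain ⟨β, hβ⟩ := exists_ne (0 : E)
  have hrange := hΦ β
  rw [range_zero, finrank_bot, Nat.cast_zero, nonpos_iff_eq_zero, Submodule.rank_eq_zero] at hrange
  refine hβ (hv ?_)
  simpa using (Submodule.eq_bot_iff _).1 hrange _ (mem_range_self (Φ β) v)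

theorem LinearMap.rank_map_mkQ_range_flip_le {n : ℕ} (f : U →ₗ[F] V →ₗ[F] W)
    (hV : ∀ v, Module.rank F (range (f.flip v)) ≤ (n + 1 : ℕ)) {u₀ : U}
    [FiniteDimensional F (range (f u₀))]
    (hu₀ : ∀ u, Module.rank F (range (f u)) ≤ Module.rank F (range (f u₀))) (v : V) :
    Module.rank F ((range (f.flip v)).map (range (f u₀)).mkQ) ≤ n := by
  set W₀ := range (f u₀)
  set g := f.compr₂ W₀.mkQ
  have hsing : ∀ x (L : (Fin (n + 1) → F) →ₗ[F] U), f u₀ x ≠ 0 →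
      ¬Function.Injective (g.flip x ∘ₗ L) := by
    intro x L hx hL
    have : FiniteDimensional F (range (f.flip x)) :=
      Module.rank_lt_aleph0_iff.1 ((hV x).trans_lt Cardinal.natCast_lt_aleph0)
    have hdim := finrank_range_of_inj hL
    rw [finrank_fin_fun] at hdim
    have hle := Submodule.finrank_mono (f.range_flip_compr₂_apply W₀.mkQ x ▸
      range_comp_le_range L (g.flip x))
    have hlt := Submodule.finrank_map_mkQ_lt (W₀ := W₀) (mem_range_self (f.flip x) u₀)
      (mem_range_self (f u₀) x) hx
    have hVx := hV x
    rw [← finrank_eq_rank, Nat.cast_le] at hVx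
    omega
  by_contra! hv
  obtain ⟨L, hL⟩ := (g.flip v).exists_injective_comp_of_le_rank_range (k := n + 1) (by
    rw [f.range_flip_compr₂_apply, Nat.cast_succ, ← Cardinal.succ_natCast]
    exact Order.succ_le_of_lt hv)
  have hv0 : f u₀ v = 0 := by
    by_contra h
    exact hsing v L h hL
  have hΦ : ∀ β, Module.rank F (range ((g ∘ₗ L) β)) ≤ finrank F W₀ := fun β => by
    rw [comp_apply, f.range_compr₂_apply, finrank_eq_rank]
    exact (rank_map_le _ _).trans (hu₀ _)
  obtain ⟨x, hx, hxL⟩ := (g ∘ₗ L).exists_apply_ne_zero_injective_flip (f u₀) hΦ hv0 hL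
  exact hsing x L hx hxL

theorem LinearMap.exists_rank_le_forall_rank_map_mkQ_range_flip_le {m n : ℕ}
    (f : U →ₗ[F] V →ₗ[F] W) (hU : ∀ u, Module.rank F (range (f u)) ≤ m)
    (hV : ∀ v, Module.rank F (range (f.flip v)) ≤ (n + 1 : ℕ)) :
    ∃ W₀ : Submodule F W, Module.rank F W₀ ≤ m ∧
      ∀ v, Module.rank F ((range (f.flip v)).map W₀.mkQ) ≤ n := by
  obtain ⟨u₀, hu₀⟩ := Cardinal.exists_forall_le_of_forall_le_natCast hU
  have : FiniteDimensional F (range (f u₀)) :=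
    Module.rank_lt_aleph0_iff.1 ((hU u₀).trans_lt Cardinal.natCast_lt_aleph0)
  exact ⟨range (f u₀), hU u₀, f.rank_map_mkQ_range_flip_le hV hu₀⟩

end Neumann

/-- P. M. Neumann: if `f : U × V → W` is bilinear with `dim f(u,V) ≤ m` for each `u`
and `dim f(U,v) ≤ n` for each `v`, then `dim span f(U,V) ≤ m * n`. -/
theorem stmt_1 (F : Type*) [Field F]
    (U V W : Type*) [AddCommGroup U] [Module F U] [AddCommGroup V] [Module F V]
    [AddCommGroup W] [Module F W]
    (f : U →ₗ[F] V →ₗ[F] W) (m n : ℕ)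
    (hU : ∀ u : U, Module.rank F ↥(LinearMap.range (f u)) ≤ (m : Cardinal))
    (hV : ∀ v : V, Module.rank F ↥(LinearMap.range (f.flip v)) ≤ (n : Cardinal)) :
    Module.rank F ↥(Submodule.span F {w : W | ∃ u v, f u v = w}) ≤ ((m * n : ℕ) : Cardinal) := by
  induction n generalizing W with
  | zero =>
    have hf : f = 0 := by
      ext u v
      have hv := hV v
      rw [Nat.cast_zero, nonpos_iff_eq_zero, Submodule.rank_eq_zero] at hv
      simpa using (Submodule.eq_bot_iff _).1 hv _ (mem_range_self (f.flip v) u)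
    simp [hf]
  | succ n ih =>
    obtain ⟨W₀, hW₀, hW₀V⟩ := f.exists_rank_le_forall_rank_map_mkQ_range_flip_le hU hV
    have hquot := ih (W ⧸ W₀) (f.compr₂ W₀.mkQ)
      (fun u => f.range_compr₂_apply W₀.mkQ u ▸ (rank_map_le _ _).trans (hU u))
      (fun v => f.range_flip_compr₂_apply W₀.mkQ v ▸ hW₀V v)
    rw [f.span_compr₂_apply] at hquot
    calc Module.rank F (Submodule.span F {w : W | ∃ u v, f u v = w})
        ≤ Module.rank F ((Submodule.span F {w : W | ∃ u v, f u v = w}).map W₀.mkQ) +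
            Module.rank F W₀ := Submodule.rank_le_rank_map_mkQ_add _ _
      _ ≤ (m * n : ℕ) + m := add_le_add hquot hW₀
      _ = (m * (n + 1) : ℕ) := by push_cast; ring
end

section
/- Let L be a vector space over F and W a subset of L that is stable under multiplication by scalars, such that there exist v_1,...,v_m ∈ L with L = W + Span{v_1,...,v_m}. Then the F-linear span of W equals the set 4^m · W = { w_1 + ⋯ + w_{4^m} : w_i ∈ W }. -/
/-!
Induct on the number of vectors. Put `W' = W + F ∙ u`, where `u` is the last vector; by induction
`span W' = k • W'` with `k = 4 ^ (m - 1)`, so `span W ⊆ k • W + F ∙ u`. If some nonzero multiple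
of `u` is a sum of `3k` elements of `W`, then so is every multiple, and `span W ⊆ 4k • W`.
Otherwise, for `a, b ∈ k • W` write `a + b = s + d • u` with `s ∈ k • W`: then `d • u = a + b - s`
is a sum of `3k` elements of `W`, so `d = 0`. Hence `k • W` is closed under addition, i.e. it is
a subspace.
-/

open Pointwise Submodule Finset

section Monoid

variable {R M : Type*} [Monoid R] [AddMonoid M] [DistribMulAction R M] {W : Set M}

theorem Set.smul_mem_nsmul_of_smul_mem (hW : ∀ (c : R) (w : M), w ∈ W → c • w ∈ W) (c : R)
    {n : ℕ} {x : M} (hx : x ∈ n • W) : c • x ∈ n • W := by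
  have himage := Set.image_nsmul (DistribSMul.toAddMonoidHom M c) W n
  refine Set.nsmul_subset_nsmul_left ?_ (himage ▸ Set.mem_image_of_mem _ hx)
  rintro _ ⟨w, hw, rfl⟩
  exact hW c w hw

end Monoid

section Module

variable {R M : Type*} [Semiring R] [AddCommMonoid M] [Module R M] {W : Set M}

theorem Set.zero_mem_of_smul_mem (hW : ∀ (c : R) (w : M), w ∈ W → c • w ∈ W)
    (hne : W.Nonempty) : (0 : M) ∈ W :=
  let ⟨w, hw⟩ := hne
  zero_smul R w ▸ hW 0 w hw

theorem Submodule.nsmul_subset_span (n : ℕ) : n • W ⊆ (span R W : Set M) := by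
  intro x hx
  obtain ⟨g, hg, rfl⟩ := Set.mem_nsmul_iff_sum.mp hx
  exact sum_mem fun i _ => subset_span (hg i)

theorem Submodule.span_subset_nsmul_of_add_mem (hW : ∀ (c : R) (w : M), w ∈ W → c • w ∈ W)
    (h0 : (0 : M) ∈ W) {k : ℕ} (hk : k ≠ 0)
    (hadd : ∀ a ∈ k • W, ∀ b ∈ k • W, a + b ∈ k • W) : (span R W : Set M) ⊆ k • W := by
  intro x hx
  induction hx using span_induction with
  | mem w hw => exact Set.subset_nsmul h0 hk hw
  | zero => exact Set.zero_mem_nsmul h0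
  | add a b _ _ ha hb => exact hadd a ha b hb
  | smul c a _ ha => exact Set.smul_mem_nsmul_of_smul_mem hW c ha

end Module

section Field

variable {F L : Type*} [Field F] [AddCommGroup L] [Module F L] {W : Set L}

theorem span_subset_four_mul_nsmul_of_span_add_line
    (hW : ∀ (c : F) (w : L), w ∈ W → c • w ∈ W) (h0 : (0 : L) ∈ W) {k : ℕ} (hk : k ≠ 0)
    (u : L) (hu : (span F (W + (F ∙ u : Set L)) : Set L) ⊆ k • (W + (F ∙ u : Set L))) :
    (span F W : Set L) ⊆ (4 * k) • W := by
  have hsplit : (span F W : Set L) ⊆ k • W + (F ∙ u : Set L) :=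
    calc (span F W : Set L)
        ⊆ span F (W + (F ∙ u : Set L)) := span_mono (Set.subset_add_left W (zero_mem _))
      _ ⊆ k • (W + (F ∙ u : Set L)) := hu
      _ = k • W + (F ∙ u : Set L) := by rw [nsmul_add, coe_set_nsmul hk]
  by_cases hline : ∃ c : F, c ≠ 0 ∧ c • u ∈ (3 * k) • W
  · obtain ⟨c, hc, hcu⟩ := hline
    have hline_sub : (F ∙ u : Set L) ⊆ (3 * k) • W := by
      intro x hx
      obtain ⟨d, rfl⟩ := mem_span_singleton.mp hx
      simpa [smul_smul, hc] using Set.smul_mem_nsmul_of_smul_mem hW (d * c⁻¹) hcu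
    calc (span F W : Set L)
        ⊆ k • W + (3 * k) • W := hsplit.trans (Set.add_subset_add_left hline_sub)
      _ = (4 * k) • W := by rw [← add_nsmul]; ring_nf
  · push Not at hline
    have hadd : ∀ a ∈ k • W, ∀ b ∈ k • W, a + b ∈ k • W := by
      intro a ha b hb
      obtain ⟨s, hs, _, hdu, hab⟩ :=
        hsplit (add_mem (nsmul_subset_span k ha) (nsmul_subset_span k hb))
      obtain ⟨d, rfl⟩ := mem_span_singleton.mp hdu
      dsimp only at hab
      have hd : d • u ∈ (3 * k) • W := by
        have hneg := Set.smul_mem_nsmul_of_smul_mem hW (-1 : F) hs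
        rw [neg_one_smul] at hneg
        have := Set.add_mem_add (Set.add_mem_add ha hb) hneg
        rwa [← hab, add_neg_cancel_comm, ← add_nsmul, ← add_nsmul,
          show k + k + k = 3 * k by ring] at this
      obtain rfl : d = 0 := by
        by_contra hd0
        exact hline d hd0 hd
      rwa [← hab, zero_smul, add_zero]
    exact (span_subset_nsmul_of_add_mem hW h0 hk hadd).trans
      (Set.nsmul_subset_nsmul_right h0 (by omega))

theorem span_subset_four_pow_card_nsmul_of_add_span_eq_univ
    (hW : ∀ (c : F) (w : L), w ∈ W → c • w ∈ W) (s : Finset L)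
    (hs : W + (span F (s : Set L) : Set L) = Set.univ) :
    (span F W : Set L) ⊆ (4 ^ #s) • W := by
  classical
  induction s using Finset.induction_on generalizing W with
  | empty =>
    have hW_univ : W = Set.univ := by simpa using hs
    simp [hW_univ]
  | insert u s hu ih =>
    have h0 : (0 : L) ∈ W := Set.zero_mem_of_smul_mem hW <|
      let ⟨w, hw, _⟩ := Set.mem_add.mp (hs ▸ Set.mem_univ 0); ⟨w, hw⟩
    have hW' : ∀ (c : F) (w : L), w ∈ W + (F ∙ u : Set L) → c • w ∈ W + (F ∙ u : Set L) := by
      rintro c _ ⟨w, hw, x, hx, rfl⟩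
      exact ⟨c • w, hW c w hw, c • x, smul_mem _ c hx, (smul_add c w x).symm⟩
    have hs' : W + (F ∙ u : Set L) + (span F (s : Set L) : Set L) = Set.univ := by
      rwa [add_assoc, ← coe_sup, ← span_insert, ← coe_insert]
    rw [card_insert_of_notMem hu, pow_succ']
    exact span_subset_four_mul_nsmul_of_span_add_line hW h0 (by positivity) u (ih hW' hs')

end Field

/-- If `W ⊆ L` is stable under scalar multiplication and `L = W + Span{v_1,…,v_m}`,
then `span W` is the set of sums of `4^m` elements of `W`. -/
theorem stmt_2 (F : Type*) [Field F] (L : Type*) [AddCommGroup L] [Module F L]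
    (W : Set L) (hW : ∀ (c : F) (w : L), w ∈ W → c • w ∈ W)
    (m : ℕ) (v : Fin m → L)
    (hcodim : ∀ x : L, ∃ w ∈ W, ∃ s ∈ Submodule.span F (Set.range v), x = w + s) :
    (Submodule.span F W : Set L)
      = {z : L | ∃ g : Fin (4 ^ m) → L, (∀ i, g i ∈ W) ∧ ∑ i, g i = z} := by
  classical
  have hcover : W + (span F ((univ.image v : Finset L) : Set L) : Set L) = Set.univ := by
    refine Set.eq_univ_of_forall fun x => ?_
    obtain ⟨w, hw, s, hs, rfl⟩ := hcodim x
    rw [coe_image, coe_univ, Set.image_univ]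
    exact Set.add_mem_add hw hs
  have h0 : (0 : L) ∈ W := Set.zero_mem_of_smul_mem hW <|
    let ⟨w, hw, _⟩ := hcodim 0; ⟨w, hw⟩
  have hcard : #(univ.image v) ≤ m := card_image_le.trans (card_fin m).le
  refine (subset_antisymm ?_ (nsmul_subset_span _)).trans (Set.ext fun _ => Set.mem_nsmul_iff_sum)
  exact (span_subset_four_pow_card_nsmul_of_add_span_eq_univ hW _ hcover).trans
    (Set.nsmul_subset_nsmul_right h0 (Nat.pow_le_pow_right (by norm_num) hcard))
end

section
/- In the algebra F_(q) generated over a field F by an invertible element a and an element x with relation a x = q x a (q ∈ F^×), for all integers i ≥ 0 and all integers j, one has (ad x^i)(a^j) = (∏_{l=0}^{i-1} (1 - q^{j-l})) x^i a^{j-i}, where the adjoint action is given by (ad x)(h) = x h a^{-1} - h x a^{-1}. -/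
/-!
Conjugation by `a` scales `x` by `q`, hence `a ^ m * x = q ^ m • (x * a ^ m)` for every
integer `m`. So `ad x` sends the monomial `x ^ i * a ^ m` to
`x ^ (i + 1) * a ^ (m - 1) - q ^ m • x ^ (i + 1) * a ^ (m - 1)`, and iterating from `a ^ j`
collects one factor `1 - q ^ (j - l)` per step.
-/

section SkewCommutation

variable {F H : Type*} [Field F] [Ring H] [Algebra F H] {q : F} {a : Hˣ} {x : H}

theorem Units.inv_mul_eq_inv_smul_mul_inv (hq : q ≠ 0) (rel : (a : H) * x = q • (x * a)) :
    ((a⁻¹ : Hˣ) : H) * x = q⁻¹ • (x * ((a⁻¹ : Hˣ) : H)) := by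
  have h : x * ((a⁻¹ : Hˣ) : H) = q • (((a⁻¹ : Hˣ) : H) * x) := by
    calc x * ((a⁻¹ : Hˣ) : H) = ((a⁻¹ : Hˣ) : H) * ((a : H) * x) * ((a⁻¹ : Hˣ) : H) := by
          rw [Units.inv_mul_cancel_left]
      _ = q • (((a⁻¹ : Hˣ) : H) * x) := by
          rw [rel, Algebra.mul_smul_comm, Algebra.smul_mul_assoc, mul_assoc, Units.mul_inv_cancel_right]
  rw [h, smul_smul, inv_mul_cancel₀ hq, one_smul]

theorem Units.zpow_mul_eq_zpow_smul_mul_zpow (hq : q ≠ 0) (rel : (a : H) * x = q • (x * a))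
    (m : ℤ) : ((a ^ m : Hˣ) : H) * x = q ^ m • (x * ((a ^ m : Hˣ) : H)) := by
  induction m using Int.induction_on with
  | zero => simp
  | succ k ih =>
      rw [zpow_add_one, Units.val_mul, mul_assoc, rel, Algebra.mul_smul_comm, ← mul_assoc, ih,
        Algebra.smul_mul_assoc, smul_smul, zpow_add_one₀ hq, mul_comm (q ^ (k : ℤ)), mul_assoc]
  | pred k ih =>
      rw [zpow_sub_one, Units.val_mul, mul_assoc, Units.inv_mul_eq_inv_smul_mul_inv hq rel,
        Algebra.mul_smul_comm, ← mul_assoc, ih, Algebra.smul_mul_assoc, smul_smul,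
        zpow_sub_one₀ hq, mul_comm q⁻¹, mul_assoc]

end SkewCommutation

section AdjointAction

variable {F H : Type*} [Field F] [Ring H] [Algebra F H]

/-- The adjoint action of the `(1, a)`-skew-primitive `x`. -/
def skewAd (x : H) (a : Hˣ) (h : H) : H :=
  x * h * ((a⁻¹ : Hˣ) : H) - h * x * ((a⁻¹ : Hˣ) : H)

theorem skewAd_smul (x : H) (a : Hˣ) (c : F) (h : H) :
    skewAd x a (c • h) = c • skewAd x a h := by
  simp only [skewAd, Algebra.mul_smul_comm, Algebra.smul_mul_assoc, smul_sub]

theorem skewAd_pow_mul_zpow {q : F} (hq : q ≠ 0) {a : Hˣ} {x : H}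
    (rel : (a : H) * x = q • (x * a)) (i : ℕ) (m : ℤ) :
    skewAd x a (x ^ i * ((a ^ m : Hˣ) : H)) =
      (1 - q ^ m) • (x ^ (i + 1) * ((a ^ (m - 1) : Hˣ) : H)) := by
  have ha : ((a ^ m : Hˣ) : H) * ((a⁻¹ : Hˣ) : H) = ((a ^ (m - 1) : Hˣ) : H) := by
    rw [← Units.val_mul, zpow_sub_one]
  rw [skewAd, mul_assoc (x ^ i) _ x, Units.zpow_mul_eq_zpow_smul_mul_zpow hq rel,
    Algebra.mul_smul_comm, Algebra.smul_mul_assoc, sub_smul, one_smul, ← mul_assoc, ← pow_succ',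
    mul_assoc, ha, mul_assoc, mul_assoc x, ha, ← mul_assoc, ← pow_succ]

end AdjointAction

/-- In `F_(q)` (generated by an invertible `a` and `x` with `a x = q x a`),
`(ad x^i)(a^j) = (∏_{l=0}^{i-1} (1 - q^{j-l})) x^i a^{j-i}`, where
`(ad x)(h) = x h a⁻¹ - h x a⁻¹`. -/
theorem stmt_3 (F : Type*) [Field F] (q : F) (hq : q ≠ 0)
    (H : Type*) [Ring H] [Algebra F H] (a : Hˣ) (x : H)
    (rel : (a : H) * x = q • (x * (a : H))) :
    ∀ (i : ℕ) (j : ℤ),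
      (fun h : H => x * h * ((a⁻¹ : Hˣ) : H) - h * x * ((a⁻¹ : Hˣ) : H))^[i]
          ((a ^ j : Hˣ) : H)
        = (∏ l ∈ Finset.range i, (1 - q ^ (j - (l : ℤ)))) •
            (x ^ i * ((a ^ (j - (i : ℤ)) : Hˣ) : H)) := by
  intro i j
  change (skewAd x a)^[i] _ = _
  induction i with
  | zero => simp
  | succ i ih =>
      rw [Function.iterate_succ_apply', ih, skewAd_smul, skewAd_pow_mul_zpow hq rel, smul_smul,
        Finset.prod_range_succ, Nat.cast_succ, sub_sub]
end

section
/- Let q ∈ F^× be an element that is not a root of unity, and let V be the vector space with basis {v_i : i ∈ ℤ} made into an F_(q)-module by a∘v_i = v_{i-1} and x∘v_i = q^i v_{i+1}. Then V is an irreducible (simple) F_(q)-module. -/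
/-!
A nonzero invariant subspace `p` contains an element `v` of minimal support size. If `i` and `j`
are two distinct indices in its support, then `x∘v - q^i a⁻¹∘v ∈ p` has coefficient
`(q^(k-1) - q^i) v_{k-1}` at `v_k`: the `i`-th term is killed while the `j`-th one survives, because
`q^j ≠ q^i` when `q` is not a root of unity. Minimality therefore forces `v` to be a multiple of a
single basis vector `v_i`, and the shifts `a^{±1}` then move `v_i` to every `v_k`.
-/

open Finsupp Finset

theorem zpow_injective_of_pow_ne_one {G₀ : Type*} [GroupWithZero G₀] {q : G₀} (hq : q ≠ 0)
    (hroot : ∀ m : ℕ, 1 ≤ m → q ^ m ≠ 1) : Function.Injective fun n : ℤ => q ^ n := by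
  have hfin : ¬IsOfFinOrder (Units.mk0 q hq) := by
    rw [← Units.isOfFinOrder_val, isOfFinOrder_iff_pow_eq_one]
    rintro ⟨m, hm, hqm⟩
    exact hroot m hm hqm
  intro m n hmn
  refine injective_zpow_iff_not_isOfFinOrder.2 hfin (Units.val_injective ?_)
  simpa only [Units.val_zpow_eq_zpow_val, Units.val_mk0] using hmn

theorem Submodule.eq_top_of_single_one_mem {R : Type*} [Semiring R] (p : Submodule R (ℤ →₀ R))
    (hup : ∀ v ∈ p, lmapDomain R R (· + 1) v ∈ p) (hdown : ∀ v ∈ p, lmapDomain R R (· - 1) v ∈ p)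
    {i : ℤ} (hi : single i 1 ∈ p) : p = ⊤ := by
  have hall : ∀ j, single j (1 : R) ∈ p := fun j => by
    induction j using Int.inductionOn' (b := i) with
    | zero => exact hi
    | succ k _ hk => simpa using hup _ hk
    | pred k _ hk => simpa using hdown _ hk
  refine eq_top_iff.2 fun v _ => ?_
  rw [← v.sum_single]
  exact p.sum_mem fun j _ => by simpa using p.smul_mem (v j) (hall j)

theorem Submodule.exists_single_one_mem_of_card_support_descent {F ι : Type*} [Field F]
    (p : Submodule F (ι →₀ F)) (hp : p ≠ ⊥)
    (hdesc : ∀ v ∈ p, 1 < #v.support → ∃ w ∈ p, w ≠ 0 ∧ #w.support < #v.support) :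
    ∃ i, single i 1 ∈ p := by
  obtain ⟨v, hv, hv0⟩ := (Submodule.ne_bot_iff p).1 hp
  induction hn : #v.support using Nat.strong_induction_on generalizing v with
  | _ n ih =>
  obtain hlt | hle := lt_or_ge 1 n
  · obtain ⟨w, hw, hw0, hwv⟩ := hdesc v hv (hn ▸ hlt)
    exact ih _ (hn ▸ hwv) w hw hw0 rfl
  · have hpos := Finset.card_pos.2 (support_nonempty_iff.2 hv0)
    obtain ⟨i, c, hc, rfl⟩ := card_support_eq_one'.1 (show #v.support = 1 by omega)
    exact ⟨i, by simpa [smul_single, hc] using p.smul_mem c⁻¹ hv⟩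

theorem Finsupp.lmapDomain_add_one_apply {R M : Type*} [Semiring R] [AddCommMonoid M] [Module R M]
    (v : ℤ →₀ M) (k : ℤ) : lmapDomain M R (· + 1) v k = v (k - 1) := by
  simpa using mapDomain_apply (add_left_injective (1 : ℤ)) v (k - 1)

section QShift

variable {F : Type*} [Field F] (q : F)

/-- The action `v_i ↦ q^i v_{i+1}` of the generator `x` of `F_(q)`. -/
noncomputable def qShift : (ℤ →₀ F) →ₗ[F] ℤ →₀ F :=
  lsum F fun i : ℤ => q ^ i • lsingle (R := F) (M := F) (i + 1)

theorem qShift_apply (v : ℤ →₀ F) (k : ℤ) : qShift q v k = q ^ (k - 1) * v (k - 1) := by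
  rw [qShift, lsum_apply, Finsupp.sum_apply, Finsupp.sum_eq_single (k - 1)]
  · simp
  · intro m _ hm
    simp [show m + 1 ≠ k by omega]
  · simp

variable {q}

theorem support_qShift_sub_smul_lmapDomain (hinj : Function.Injective fun n : ℤ => q ^ n)
    (v : ℤ →₀ F) (i : ℤ) :
    (qShift q v - q ^ i • lmapDomain F F (· + 1) v).support =
      (v.support.erase i).map (addRightEmbedding 1) := by
  ext k
  simp only [mem_support_iff, Finsupp.sub_apply, Finsupp.smul_apply, qShift_apply,
    lmapDomain_add_one_apply, smul_eq_mul, mem_map, mem_erase, addRightEmbedding_apply]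
  rw [← sub_mul, mul_ne_zero_iff, sub_ne_zero, hinj.ne_iff]
  constructor
  · rintro ⟨hki, hv⟩
    exact ⟨k - 1, ⟨hki, hv⟩, sub_add_cancel k 1⟩
  · rintro ⟨m, hm, rfl⟩
    simpa using hm

end QShift

/-- If `q` is not a root of unity, the module `V = ⊕_{i∈ℤ} F v_i` over `F_(q)`
with `a∘v_i = v_{i-1}`, `a⁻¹∘v_i = v_{i+1}`, `x∘v_i = q^i v_{i+1}` is irreducible. -/
theorem stmt_5 (F : Type*) [Field F] (q : F) (hq : q ≠ 0)
    (hroot : ∀ m : ℕ, 1 ≤ m → q ^ m ≠ 1) :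
    (⊥ : Submodule F (ℤ →₀ F)) ≠ ⊤ ∧
    ∀ p : Submodule F (ℤ →₀ F),
      (∀ v ∈ p,
        Finsupp.lmapDomain F F (fun i : ℤ => i - 1) v ∈ p ∧
        Finsupp.lmapDomain F F (fun i : ℤ => i + 1) v ∈ p ∧
        Finsupp.lsum F (fun i : ℤ => (q ^ i : F) • Finsupp.lsingle (R := F) (M := F) (i + 1)) v ∈ p) →
      p = ⊥ ∨ p = ⊤ := by
  have hinj := zpow_injective_of_pow_ne_one hq hroot
  refine ⟨bot_ne_top, fun p hp => or_iff_not_imp_left.2 fun hbot => ?_⟩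
  obtain ⟨i, hi⟩ := p.exists_single_one_mem_of_card_support_descent hbot fun v hv hcard => by
    obtain ⟨i, hi⟩ := Finset.card_pos.1 (by omega : 0 < #v.support)
    have hw := congrArg Finset.card (support_qShift_sub_smul_lmapDomain hinj v i)
    rw [card_map, card_erase_of_mem hi] at hw
    refine ⟨qShift q v - q ^ i • lmapDomain F F (· + 1) v,
      p.sub_mem (hp v hv).2.2 (p.smul_mem (q ^ i) (hp v hv).2.1), ?_, by omega⟩
    rw [← support_nonempty_iff, ← Finset.card_pos]
    omega
  exact p.eq_top_of_single_one_mem (fun v hv => (hp v hv).2.1) (fun v hv => (hp v hv).1) hi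
end

section
/- Let q ∈ F be a primitive n-th root of unity and let V_n be the vector space with basis {v_i : i ∈ ℤ/nℤ}, with F_(q)-module structure a∘v_i = v_{i-1} and x∘v_i = q^i v_{i+1} (indices mod n). Then V_n is an irreducible F_(q)-module of dimension n, and its endomorphism algebra is F · id. -/
/-!
The composite `x ∘ a` acts diagonally, `v_i ↦ q^(i-1) v_i`, with pairwise distinct eigenvalues
because `q` is a primitive `n`-th root of unity. A nonzero submodule stable under a diagonal
operator with distinct eigenvalues contains a basis vector (subtract an eigenvalue multiple to
shrink the support), and the cyclic shift `a` then carries that basis vector to all the others.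
Likewise an endomorphism commuting with `x ∘ a` preserves its eigenlines, so it is diagonal,
and commuting with `a` forces the diagonal entries to agree.
-/

open Finsupp

section Diagonal

variable {ι F : Type*} [Field F] {T : (ι →₀ F) →ₗ[F] (ι →₀ F)} {d : ι → F}

theorem support_sub_smul_eq_erase [DecidableEq ι] (hd : Function.Injective d)
    (hT : ∀ v k, T v k = d k * v k) (v : ι →₀ F) (j : ι) :
    (T v - d j • v).support = v.support.erase j := by
  ext k
  simp [hT, ← sub_mul, sub_eq_zero, hd.eq_iff]

theorem exists_single_one_mem_of_diagonal (hd : Function.Injective d)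
    (hT : ∀ v k, T v k = d k * v k) {p : Submodule F (ι →₀ F)} (hp : ∀ v ∈ p, T v ∈ p)
    (hne : p ≠ ⊥) : ∃ i, single i (1 : F) ∈ p := by
  classical
  obtain ⟨v, hvp, hv0⟩ := Submodule.exists_mem_ne_zero_of_ne_bot hne
  induction h : v.support.card using Nat.strong_induction_on generalizing v with
  | _ m ih =>
    have hm : m ≠ 0 := by rwa [← h, Finset.card_ne_zero, support_nonempty_iff]
    obtain hm1 | hm1 := eq_or_ne m 1
    · obtain ⟨i, b, hb, rfl⟩ := card_support_eq_one'.1 (h.trans hm1)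
      refine ⟨i, ?_⟩
      simpa [smul_single, hb] using p.smul_mem b⁻¹ hvp
    · obtain ⟨j, hj⟩ := support_nonempty_iff.2 hv0
      have hcard : (T v - d j • v).support.card = m - 1 := by
        rw [support_sub_smul_eq_erase hd hT, Finset.card_erase_of_mem hj, h]
      refine ih (m - 1) (by omega) _ (p.sub_mem (hp v hvp) (p.smul_mem _ hvp)) ?_ hcard
      rw [Ne, ← support_eq_empty, ← Finset.card_eq_zero, hcard]
      omega

theorem eq_single_of_commute_diagonal (hd : Function.Injective d)
    (hT : ∀ v k, T v k = d k * v k) {φ : (ι →₀ F) →ₗ[F] (ι →₀ F)}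
    (hφ : ∀ v, φ (T v) = T (φ v)) (i : ι) :
    φ (single i 1) = single i (φ (single i 1) i) := by
  classical
  have hTi : T (single i 1) = d i • single i 1 := by
    ext k
    by_cases hk : i = k <;> simp [hT, hk]
  refine support_subset_singleton.1 fun k hk => Finset.mem_singleton.2 (hd ?_)
  have hk' := congrArg (· k) (hφ (single i 1))
  simp only [hTi, map_smul, hT, Finsupp.smul_apply, smul_eq_mul] at hk'
  exact (mul_right_cancel₀ (mem_support_iff.1 hk) hk').symm

end Diagonal

theorem ZMod.forall_of_sub_one {n : ℕ} [NeZero n] {P : ZMod n → Prop} {i : ZMod n} (hi : P i)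
    (h : ∀ j, P j → P (j - 1)) (j : ZMod n) : P j := by
  have hP : ∀ m : ℕ, P (i - m) := by
    intro m
    induction m with
    | zero => simpa using hi
    | succ m ih => simpa [sub_sub] using h _ ih
  simpa using hP (i - j).val

/- `V_n` is modelled as `ZMod n →₀ F` with `v_i = single i 1`; `actA` and `actX` are the actions
of the generators `a` and `x`. -/
namespace QuantumTorusModule

variable (F : Type*) [Field F] (n : ℕ)

noncomputable def actA : (ZMod n →₀ F) →ₗ[F] (ZMod n →₀ F) :=
  lmapDomain F F fun i => i - 1

variable {F n}

noncomputable def actX (q : F) : (ZMod n →₀ F) →ₗ[F] (ZMod n →₀ F) :=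
  lsum F fun i : ZMod n => (q ^ i.val : F) • lsingle (R := F) (M := F) (i + 1)

theorem actA_single (i : ZMod n) (c : F) : actA F n (single i c) = single (i - 1) c := by
  simp [actA, mapDomain_single]

theorem actX_single (q : F) (i : ZMod n) (c : F) :
    actX q (single i c) = single (i + 1) (q ^ i.val * c) := by
  simp [actX, smul_single]

theorem actX_actA_apply (q : F) (v : ZMod n →₀ F) (k : ZMod n) :
    actX q (actA F n v) k = q ^ (k - 1).val * v k := by
  induction v using Finsupp.induction_linear with
  | zero => simp
  | add f g hf hg => simp [hf, hg, mul_add]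
  | single i c =>
    rw [actA_single, actX_single, sub_add_cancel, ← smul_eq_mul, ← smul_single]
    by_cases hk : i = k <;> simp [hk]

variable [NeZero n] {q : F}

theorem injective_pow_val_sub_one (hq : IsPrimitiveRoot q n) :
    Function.Injective fun k : ZMod n => q ^ (k - 1).val := fun _ _ h =>
  sub_left_injective (ZMod.val_injective n (hq.pow_inj (ZMod.val_lt _) (ZMod.val_lt _) h))

theorem eq_bot_or_eq_top_of_invariant (hq : IsPrimitiveRoot q n) (p : Submodule F (ZMod n →₀ F))
    (hA : ∀ v ∈ p, actA F n v ∈ p) (hX : ∀ v ∈ p, actX q v ∈ p) : p = ⊥ ∨ p = ⊤ := by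
  refine or_iff_not_imp_left.2 fun hne => ?_
  obtain ⟨i, hi⟩ := exists_single_one_mem_of_diagonal (T := actX q ∘ₗ actA F n)
    (injective_pow_val_sub_one hq) (actX_actA_apply q) (fun v hv => hX _ (hA v hv)) hne
  have hall : ∀ j, single j (1 : F) ∈ p :=
    ZMod.forall_of_sub_one hi fun j hj => by simpa [actA_single] using hA _ hj
  rw [eq_top_iff, ← (Finsupp.basisSingleOne (R := F)).span_eq, Submodule.span_le]
  rintro _ ⟨j, rfl⟩
  simpa using hall j

theorem exists_eq_smul_id_of_commute (hq : IsPrimitiveRoot q n)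
    (φ : (ZMod n →₀ F) →ₗ[F] (ZMod n →₀ F)) (hA : ∀ v, φ (actA F n v) = actA F n (φ v))
    (hX : ∀ v, φ (actX q v) = actX q (φ v)) : ∃ c : F, φ = c • LinearMap.id := by
  set c : ZMod n → F := fun i => φ (single i 1) i
  have hφ (i : ZMod n) : φ (single i 1) = single i (c i) :=
    eq_single_of_commute_diagonal (T := actX q ∘ₗ actA F n) (injective_pow_val_sub_one hq)
      (actX_actA_apply q) (fun v => by simp only [LinearMap.comp_apply, hA, hX]) i
  have hc (i : ZMod n) : c (i - 1) = c i := by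
    have h := hA (single i 1)
    rw [actA_single, hφ, hφ, actA_single] at h
    exact single_injective _ h
  have hconst : ∀ j, c j = c 0 := ZMod.forall_of_sub_one rfl fun j hj => (hc j).trans hj
  refine ⟨c 0, lhom_ext fun i b => ?_⟩
  rw [← mul_one b, ← smul_eq_mul, ← smul_single, map_smul, hφ, hconst]
  simp [smul_single, mul_comm]

end QuantumTorusModule

open QuantumTorusModule in
/-- If `q` is a primitive `n`-th root of unity, the module `V_n = ⊕_{i∈ℤ/n} F v_i`
over `F_(q)` (with `a∘v_i = v_{i-1}`, `x∘v_i = q^i v_{i+1}`, indices mod `n`) is an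
irreducible module of dimension `n` whose endomorphism algebra is `F·id`. -/
theorem stmt_7 (F : Type*) [Field F] (n : ℕ) (hn : 0 < n) (q : F)
    (hqn : q ^ n = 1) (hprim : ∀ k : ℕ, 0 < k → k < n → q ^ k ≠ 1) :
    Module.finrank F (ZMod n →₀ F) = n ∧
    ((⊥ : Submodule F (ZMod n →₀ F)) ≠ ⊤ ∧
      ∀ p : Submodule F (ZMod n →₀ F),
        (∀ v ∈ p,
          Finsupp.lmapDomain F F (fun i : ZMod n => i - 1) v ∈ p ∧
          Finsupp.lmapDomain F F (fun i : ZMod n => i + 1) v ∈ p ∧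
          Finsupp.lsum F (fun i : ZMod n => (q ^ i.val : F) • Finsupp.lsingle (R := F) (M := F) (i + 1)) v ∈ p) →
        p = ⊥ ∨ p = ⊤) ∧
    (∀ φ : (ZMod n →₀ F) →ₗ[F] (ZMod n →₀ F),
      (∀ v : ZMod n →₀ F,
        φ (Finsupp.lmapDomain F F (fun i : ZMod n => i - 1) v)
          = Finsupp.lmapDomain F F (fun i : ZMod n => i - 1) (φ v)) →
      (∀ v : ZMod n →₀ F,
        φ (Finsupp.lsum F (fun i : ZMod n => (q ^ i.val : F) • Finsupp.lsingle (R := F) (M := F) (i + 1)) v)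
          = Finsupp.lsum F (fun i : ZMod n => (q ^ i.val : F) • Finsupp.lsingle (R := F) (M := F) (i + 1)) (φ v)) →
      ∃ c : F, φ = c • LinearMap.id) := by
  have : NeZero n := ⟨hn.ne'⟩
  have hq : IsPrimitiveRoot q n := .mk_of_lt q hn hqn hprim
  refine ⟨by simp, ⟨bot_ne_top, fun p hp => ?_⟩, exists_eq_smul_id_of_commute hq⟩
  exact eq_bot_or_eq_top_of_invariant hq p (fun v hv => (hp v hv).1) fun v hv => (hp v hv).2.2
end

section
/- If q ∈ F^× is not a root of unity, then the algebra F_(q) does not satisfy any nontrivial polynomial identity. -/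
/-!
Pick a word `w₀` of length `D` occurring in `f` with coefficient `c ≠ 0`, and substitute for the
`i`-th variable the generic element `∑_{r < D} q ^ μ(i,r) • x a ^ m(i,r)`. Expanding, a word in the
letters `(i, r)` becomes `q ^ (μ ⬝ᵥ count + m ⬝ᵥ rightWeight) • x ^ n a ^ (m ⬝ᵥ count)`, where
`count` is its content and `rightWeight` is the exponent collected while moving every `a` to the
right past the later `x`'s. As `q` is not a root of unity, the characters `μ ↦ q ^ (μ ⬝ᵥ κ)` of
`ℕ^S` are distinct, hence linearly independent. Separating first by content and then by right
weight isolates the word `(w₀ 0, 0) ⋯ (w₀ (D-1), D-1)`, the only one with its content and right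
weight, whose coefficient is `c`; so `c = 0`.
-/

open Finset

section Characters

theorem injective_pow_of_ne_zero {K : Type*} [GroupWithZero K] {q : K} (hq : q ≠ 0)
    (hroot : ∀ m : ℕ, 1 ≤ m → q ^ m ≠ 1) : Function.Injective fun n : ℕ => q ^ n := by
  have : ¬IsOfFinOrder (Units.mk0 q hq) := fun h => by
    obtain ⟨m, hm, hqm⟩ := isOfFinOrder_iff_pow_eq_one.mp h
    exact hroot m hm (by simpa [Units.ext_iff] using hqm)
  intro n m hnm
  exact injective_pow_iff_not_isOfFinOrder.mpr this (Units.ext (by simpa using hnm))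

variable {F : Type*} [Field F] {q : F}

theorem sum_filter_eq_zero_of_forall_sum_pow_dotProduct_smul_eq_zero
    (hq : Function.Injective fun n : ℕ => q ^ n)
    {S ι V : Type*} [Fintype S] [AddCommGroup V] [Module F V]
    (I : Finset ι) (κ : ι → S → ℕ) (v : ι → V)
    (h : ∀ μ : S → ℕ, ∑ i ∈ I, q ^ (μ ⬝ᵥ κ i) • v i = 0) (κ₀ : S → ℕ) :
    ∑ i ∈ I with κ i = κ₀, v i = 0 := by
  classical
  let χ (ν : S → ℕ) : Multiplicative (S → ℕ) →* F :=
    { toFun μ := q ^ (μ.toAdd ⬝ᵥ ν)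
      map_one' := by simp
      map_mul' μ μ' := by simp [add_dotProduct, pow_add] }
  have hχ : Function.Injective χ := fun ν ν' hνν' => funext fun s => hq <| by
    simpa [χ] using DFunLike.congr_fun hνν' (.ofAdd (Pi.single s 1))
  have hli := (linearIndependent_monoidHom (Multiplicative (S → ℕ)) F).comp χ hχ
  refine (Module.forall_dual_apply_eq_zero_iff F _).mp fun φ => ?_
  rw [map_sum]
  refine linearIndependent_iff'.mp hli (insert κ₀ (I.image κ))
    (fun ν => ∑ i ∈ I with κ i = ν, φ (v i)) ?_ κ₀ (mem_insert_self _ _)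
  funext μ
  have := congrArg φ (h μ.toAdd)
  simp only [map_sum, map_smul, map_zero, smul_eq_mul] at this
  rw [← Finset.sum_fiberwise_of_maps_to (g := κ) (t := insert κ₀ (I.image κ))
    (fun i hi => mem_insert_of_mem (mem_image_of_mem κ hi))] at this
  simp only [Finset.sum_apply, Pi.smul_apply, smul_eq_mul, Finset.sum_mul, Pi.zero_apply]
  rw [← this]
  refine sum_congr rfl fun ν _ => sum_congr rfl fun i hi => ?_
  rw [(mem_filter.mp hi).2, mul_comm]
  rfl

end Characters

namespace List

variable {S : Type*} [DecidableEq S]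

/-- `w.rightWeight s` adds up, over the occurrences of `s` in `w`, the number of letters to the
right of that occurrence. -/
@[simp]
def rightWeight : List S → S → ℕ
  | [] => 0
  | s :: w => Pi.single s w.length + rightWeight w

theorem rightWeight_eq_zero_of_not_mem {w : List S} {s : S} (hs : s ∉ w) :
    w.rightWeight s = 0 := by
  induction w with
  | nil => rfl
  | cons t w ih =>
    rw [mem_cons, not_or] at hs
    simp [Ne.symm hs.1, ih hs.2]

theorem rightWeight_lt_length {w : List S} (hw : w.Nodup) {s : S} (hs : s ∈ w) :
    w.rightWeight s < w.length := by
  induction w with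
  | nil => simp at hs
  | cons t w ih =>
    rw [nodup_cons] at hw
    rcases eq_or_ne s t with rfl | hst
    · simp [rightWeight_eq_zero_of_not_mem hw.1]
    · have := ih hw.2 ((mem_cons.mp hs).resolve_left hst)
      simp [hst]
      omega

theorem count_cons_eq_single_add (t : S) (w : List S) :
    (fun s => (t :: w).count s) = Pi.single t 1 + fun s => w.count s := by
  ext s
  rcases eq_or_ne s t with rfl | hst
  · simp [add_comm]
  · simp [hst, Ne.symm hst]

theorem eq_of_perm_of_rightWeight_eq {w L : List S} (hp : w ~ L)
    (hr : w.rightWeight = L.rightWeight) (hL : L.Nodup) : w = L := by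
  induction L generalizing w with
  | nil => exact hp.eq_nil
  | cons t L ih =>
    rcases w with _ | ⟨s, w'⟩
    · exact absurd hp.symm.eq_nil (cons_ne_nil t L)
    have hlen : w'.length = L.length := by simpa using hp.length_eq
    rw [nodup_cons] at hL
    obtain rfl : s = t := by
      -- otherwise `s` gets weight `≥ L.length` in `w`, but less than that in the nodup `t :: L`
      by_contra hst
      have hsL : s ∈ L := (mem_cons.mp (hp.subset mem_cons_self)).resolve_left hst
      have hrs := congrFun hr s
      simp only [rightWeight, Pi.add_apply, Pi.single_eq_same, Pi.single_apply, hst,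
        if_false, zero_add] at hrs
      have := rightWeight_lt_length hL.2 hsL
      omega
    rw [ih hp.cons_inv (by simpa [hlen] using hr) hL.2]

theorem prod_map_sum {R ι κ : Type*} [Semiring R] [Fintype κ] (h : ι → κ → R)
    (w : List ι) :
    (w.map fun i => ∑ r, h i r).prod =
      ∑ φ : Fin w.length → κ, (ofFn fun t => h w[t] (φ t)).prod := by
  induction w with
  | nil => simp
  | cons i w ih =>
    rw [map_cons, prod_cons, ih, sum_mul_sum, ← Fintype.sum_prod_type']
    refine Fintype.sum_equiv (Fin.consEquiv fun _ => κ) _ _ fun p => ?_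
    simp [ofFn_succ, Fin.consEquiv]

end List

theorem FreeAlgebra.lift_apply_eq_sum {R X A : Type*} [CommSemiring R] [Semiring A]
    [Algebra R A] (g : X → A) (f : FreeAlgebra R X) :
    lift R g f = (equivMonoidAlgebraFreeMonoid f).coeff.sum
      fun w r => r • (w.toList.map g).prod := by
  have : lift R g = (MonoidAlgebra.lift R A (FreeMonoid X) (FreeMonoid.lift g)).comp
      (equivMonoidAlgebraFreeMonoid (R := R) (X := X)).toAlgHom := by
    ext i
    simp [equivMonoidAlgebraFreeMonoid]
  rw [this, AlgHom.comp_apply, MonoidAlgebra.lift_apply]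
  simp [FreeMonoid.lift_apply]

namespace QuantumPlane

section Commutation

variable {F H : Type*} [CommSemiring F] [Semiring H] [Algebra F H] {q : F} {a x : H}

theorem mul_pow_eq_smul (rel : a * x = q • (x * a)) (n : ℕ) :
    a * x ^ n = q ^ n • (x ^ n * a) := by
  induction n with
  | zero => simp
  | succ n ih =>
    rw [pow_succ, ← mul_assoc, ih, smul_mul_assoc, mul_assoc, rel, mul_smul_comm, smul_smul,
      ← mul_assoc, ← pow_succ, ← pow_succ]

theorem pow_mul_pow_eq_smul (rel : a * x = q • (x * a)) (m n : ℕ) :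
    a ^ m * x ^ n = q ^ (m * n) • (x ^ n * a ^ m) := by
  induction m with
  | zero => simp
  | succ m ih =>
    rw [pow_succ', mul_assoc, ih, mul_smul_comm, ← mul_assoc, mul_pow_eq_smul rel, smul_mul_assoc,
      smul_smul, mul_assoc, ← pow_succ', ← pow_add, add_mul, one_mul, add_comm]

theorem prod_map_smul_mul_pow {S : Type*} [Fintype S] [DecidableEq S] (rel : a * x = q • (x * a))
    (μ m : S → ℕ) (w : List S) :
    (w.map fun s => q ^ μ s • (x * a ^ m s)).prod =
      q ^ (μ ⬝ᵥ (w.count ·) + m ⬝ᵥ w.rightWeight) • (x ^ w.length * a ^ (m ⬝ᵥ (w.count ·))) := by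
  induction w with
  | nil => simp
  | cons s w ih =>
    rw [List.map_cons, List.prod_cons, ih, mul_smul_comm, smul_mul_assoc, smul_smul, mul_assoc,
      ← mul_assoc (a ^ m s), pow_mul_pow_eq_smul rel, smul_mul_assoc, mul_smul_comm, smul_smul,
      ← pow_add, ← pow_add]
    simp only [List.count_cons_eq_single_add, List.rightWeight, dotProduct_add,
      dotProduct_single, List.length_cons, mul_one]
    congr 1
    · congr 1
      ring
    · rw [pow_succ', pow_add, mul_assoc, mul_assoc]

end Commutation

variable {F H : Type*} [Field F] [Ring H] [Algebra F H] {q : F} {a x : H}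

theorem sum_filter_eq_zero_of_forall_sum_smul_prod_map_eq_zero
    (hq : Function.Injective fun n : ℕ => q ^ n) (rel : a * x = q • (x * a))
    (hxa : ∀ n m : ℕ, x ^ n * a ^ m ≠ 0)
    {S ι : Type*} [Fintype S] [DecidableEq S] (I : Finset ι) (W : ι → List S) (C : ι → F)
    (h : ∀ μ m : S → ℕ, ∑ i ∈ I, C i • ((W i).map fun s => q ^ μ s • (x * a ^ m s)).prod = 0)
    {L : List S} (hL : L.Nodup) :
    ∑ i ∈ I with W i = L, C i = 0 := by
  have hcontent : ∀ m : S → ℕ,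
      ∑ i ∈ I with ((W i).count ·) = (L.count ·), C i * q ^ (m ⬝ᵥ (W i).rightWeight) = 0 := by
    intro m
    have := sum_filter_eq_zero_of_forall_sum_pow_dotProduct_smul_eq_zero hq I
      (fun i => ((W i).count ·))
      (fun i => (C i * q ^ (m ⬝ᵥ (W i).rightWeight)) •
        (x ^ (W i).length * a ^ (m ⬝ᵥ ((W i).count ·))))
      (fun μ => by
        rw [← h μ m]
        refine sum_congr rfl fun i _ => ?_
        rw [prod_map_smul_mul_pow rel, smul_smul, smul_smul, pow_add]
        ring_nf)
      (L.count ·)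
    -- on a content class the monomial `x ^ length * a ^ (m ⬝ᵥ count)` is constant
    rw [sum_congr rfl fun i hi => by
      have hc := (mem_filter.mp hi).2
      rw [hc, (List.perm_iff_count.mpr (congrFun hc)).length_eq], ← sum_smul] at this
    exact (smul_eq_zero.mp this).resolve_right (hxa _ _)
  have := sum_filter_eq_zero_of_forall_sum_pow_dotProduct_smul_eq_zero hq _
    (fun i => (W i).rightWeight) C (fun m => by simpa only [smul_eq_mul, mul_comm] using hcontent m)
    L.rightWeight
  rwa [filter_filter, filter_congr (q := (W · = L)) fun i _ =>
    ⟨fun h => List.eq_of_perm_of_rightWeight_eq (List.perm_iff_count.mpr (congrFun h.1)) h.2 hL,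
      fun h => h ▸ ⟨rfl, rfl⟩⟩] at this

theorem coeff_eq_zero_of_forall_lift_eq_zero (hq : Function.Injective fun n : ℕ => q ^ n)
    (rel : a * x = q • (x * a)) (hxa : ∀ n m : ℕ, x ^ n * a ^ m ≠ 0)
    {X : Type*} [Fintype X] {f : FreeAlgebra F X}
    (hf : ∀ g : X → H, FreeAlgebra.lift F g f = 0) (w₀ : FreeMonoid X) :
    (FreeAlgebra.equivMonoidAlgebraFreeMonoid f).coeff w₀ = 0 := by
  classical
  set c := (FreeAlgebra.equivMonoidAlgebraFreeMonoid f).coeff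
  by_contra hc
  have hw₀ : w₀ ∈ c.support := Finsupp.mem_support_iff.mpr hc
  set D := w₀.toList.length
  -- the letter `(i, r)` stands for the `r`-th copy of the variable `i`
  let W (i : Σ w : FreeMonoid X, Fin w.toList.length → Fin D) : List (X × Fin D) :=
    List.ofFn fun t => (i.1.toList[t], i.2 t)
  let I : Finset (Σ w : FreeMonoid X, Fin w.toList.length → Fin D) := c.support.sigma fun _ => univ
  have hW : ∀ μ m : X × Fin D → ℕ,
      ∑ i ∈ I, c i.1 • ((W i).map fun s => q ^ μ s • (x * a ^ m s)).prod = 0 := by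
    intro μ m
    rw [← hf fun j => ∑ r, q ^ μ (j, r) • (x * a ^ m (j, r)),
      FreeAlgebra.lift_apply_eq_sum, Finsupp.sum, sum_sigma]
    refine sum_congr rfl fun w _ => ?_
    rw [List.prod_map_sum, smul_sum]
    simp only [W, List.map_ofFn]
    rfl
  have hfiber : {i ∈ I | W i = W ⟨w₀, id⟩} = {⟨w₀, id⟩} := by
    ext ⟨w, φ⟩
    simp only [I, mem_filter, mem_sigma, mem_univ, and_true, mem_singleton]
    refine ⟨fun ⟨_, h⟩ => ?_, fun h => by cases h; exact ⟨hw₀, rfl⟩⟩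
    obtain rfl : w = w₀ := FreeMonoid.toList.injective <| by
      simpa [W, List.map_ofFn, Function.comp_def] using congrArg (List.map Prod.fst) h
    simp only [W, List.ofFn_inj, funext_iff, Prod.ext_iff] at h
    exact Sigma.ext rfl (heq_of_eq (funext fun t => (h t).2))
  have := sum_filter_eq_zero_of_forall_sum_smul_prod_map_eq_zero hq rel hxa I W (c ·.1) hW
    (L := W ⟨w₀, id⟩) (List.nodup_ofFn_ofInjective fun t t' h => (Prod.ext_iff.mp h).2)
  rw [hfiber, sum_singleton] at this
  exact hc this

end QuantumPlane

/-- If `q` is not a root of unity, then `F_(q)` satisfies no nontrivial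
polynomial identity. -/
theorem stmt_10 (F : Type*) [Field F] (q : F) (hq : q ≠ 0)
    (hroot : ∀ m : ℕ, 1 ≤ m → q ^ m ≠ 1)
    (H : Type*) [Ring H] [Algebra F H] (a : Hˣ) (x : H)
    (rel : (a : H) * x = q • (x * (a : H)))
    (b : Module.Basis (ℕ × ℤ) F H) (hb : ∀ p : ℕ × ℤ, b p = x ^ p.1 * ((a ^ p.2 : Hˣ) : H)) :
    ¬ ∃ (k : ℕ) (f : FreeAlgebra F (Fin k)),
        f ≠ 0 ∧ ∀ g : Fin k → H, FreeAlgebra.lift F g f = 0 := by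
  rintro ⟨k, f, hf, hid⟩
  have hxa (n m : ℕ) : x ^ n * (a : H) ^ m ≠ 0 := by
    simpa [hb] using b.ne_zero (n, m)
  refine hf (FreeAlgebra.equivMonoidAlgebraFreeMonoid.injective ?_)
  rw [map_zero, ← MonoidAlgebra.coeff_eq_zero]
  ext w
  exact QuantumPlane.coeff_eq_zero_of_forall_lift_eq_zero (injective_pow_of_ne_zero hq hroot) rel
    hxa hid w
end

section
/- Let G be a group and H = F[G] its group algebra over a field F, with the adjoint (conjugation) action (ad g)(h) = g h g^{-1} for g ∈ G. Then H_fin = F[Δ(G)], where Δ(G) is the set of elements of G having finitely many conjugates. -/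
/-!
Conjugation by `u ∈ G` maps the support of `h ∈ F[G]` onto `u · supp h · u⁻¹`. A family of
elements of `F[G]` spans a finite-dimensional subspace exactly when their supports all lie in one
finite subset of `G`, so the conjugates of `h` span a finite-dimensional subspace iff the union of
the conjugacy classes of the elements of `supp h` is finite, i.e. iff `supp h ⊆ Δ(G)`.
-/

open Submodule

namespace MonoidAlgebra

variable {k G : Type*}

theorem support_coeff_of_mul_mul_of_inv [Semiring k] [Group G] (u : G) (x : MonoidAlgebra k G) :
    (↑(of k G u * x * of k G u⁻¹).coeff.support : Set G) =
      (fun g => u * g * u⁻¹) '' x.coeff.support := by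
  rw [of_apply, of_apply, support_coeff_mul_single _ _ (by simp),
    support_coeff_single_mul _ _ (by simp)]
  simp only [Finset.coe_map, Set.image_image]
  rfl

theorem iUnion_support_coeff_conj [Semiring k] [Group G] (x : MonoidAlgebra k G) :
    ⋃ y ∈ {y | ∃ u, of k G u * x * of k G u⁻¹ = y}, (y.coeff.support : Set G) =
      ⋃ g ∈ (x.coeff.support : Set G), {y | ∃ u, u * g * u⁻¹ = y} := by
  ext y
  simp only [Set.mem_iUnion, Set.mem_ofPred_eq, exists_prop, exists_exists_eq_and,
    support_coeff_of_mul_mul_of_inv, Set.mem_image]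
  exact ⟨fun ⟨u, g, hg, hy⟩ => ⟨g, hg, u, hy⟩, fun ⟨g, hg, u, hy⟩ => ⟨u, g, hg, hy⟩⟩

theorem finiteDimensional_iff_exists_le_supported [DivisionRing k]
    (V : Submodule k (MonoidAlgebra k G)) :
    FiniteDimensional k V ↔ ∃ s : Set G, s.Finite ∧ V ≤ supported k k s := by
  classical
  constructor
  · intro hV
    obtain ⟨t, rfl⟩ := (fg_iff_finiteDimensional V).mpr hV
    refine ⟨⋃ x ∈ t, x.coeff.support,
      t.finite_toSet.biUnion fun x _ => x.coeff.support.finite_toSet, ?_⟩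
    rw [span_le]
    exact fun x hx =>
      Set.subset_biUnion_of_mem (u := fun x : MonoidAlgebra k G => (x.coeff.support : Set G)) hx
  · rintro ⟨s, hs, hV⟩
    have : Finite s := hs
    have : FiniteDimensional k (supported k k s) := (supportedEquivFinsupp s).symm.finiteDimensional
    exact finiteDimensional_of_le hV

theorem finiteDimensional_span_iff_finite_iUnion_support [DivisionRing k]
    (S : Set (MonoidAlgebra k G)) :
    FiniteDimensional k (span k S) ↔ (⋃ x ∈ S, (x.coeff.support : Set G)).Finite := by
  simp only [finiteDimensional_iff_exists_le_supported, span_le]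
  exact ⟨fun ⟨s, hs, hS⟩ => hs.subset (Set.iUnion₂_subset hS),
    fun hS => ⟨_, hS, fun x hx =>
      Set.subset_biUnion_of_mem (u := fun x => (x.coeff.support : Set G)) hx⟩⟩

end MonoidAlgebra

open MonoidAlgebra

/-- For a group algebra `H = F[G]` with adjoint (conjugation) action
`(ad g)(h) = g h g⁻¹`, one has `H_fin = F[Δ(G)]`, where `Δ(G)` is the set of
elements of `G` with finitely many conjugates. -/
theorem stmt_14 (F : Type*) [Field F] (G : Type*) [Group G] :
    {h : MonoidAlgebra F G |
        FiniteDimensional F ↥(Submodule.span F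
          {k : MonoidAlgebra F G | ∃ g : G,
            MonoidAlgebra.of F G g * h * MonoidAlgebra.of F G g⁻¹ = k})}
      = ↑(Submodule.span F
          ((fun g : G => (MonoidAlgebra.of F G g : MonoidAlgebra F G)) ''
            {g : G | Set.Finite {y : G | ∃ s : G, s * g * s⁻¹ = y}})) := by
  ext h
  rw [Set.mem_ofPred_eq, finiteDimensional_span_iff_finite_iUnion_support,
    iUnion_support_coeff_conj, SetLike.mem_coe]
  simp only [of_apply, ← supported_eq_span_single, mem_supported]
  exact ⟨fun hfin g hg =>
      hfin.subset (Set.subset_biUnion_of_mem (u := fun g => {y | ∃ s, s * g * s⁻¹ = y}) hg),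
    fun hfin => h.coeff.support.finite_toSet.biUnion hfin⟩
end
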